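/- arXiv:1801.01253 — 3 statements merged into one kernel-verified Lean document; each statement's English description precedes it below -/
import Mathlib

section
/- For p_a, p_b ∈ [0,1] with p̄ = (p_a+p_b)/2 ∈ (0,1): kl(p_a,p̄) + kl(p_b,p̄) ≥ min over p ∈ (0,1) of max(kl(p_a,p), kl(p_b,p)) ≥ (1/2)(kl(p_a,p̄) + kl(p_b,p̄)). -/
noncomputable def kl (p q : ℝ) : ℝ := p * Real.log (p / q) + (1 - p) * Real.log ((1 - p) / (1 - q))

lemma key_ineq (t s : ℝ) (ht : 0 ≤ t) (hs : 0 < s) : t - s ≤ t * Real.log (t / s) := by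
  rcases ht.eq_or_lt with h | h
  · simp [← h]; linarith
  · have h1 : Real.log (s / t) ≤ s / t - 1 := Real.log_le_sub_one_of_pos (by positivity)
    have h2 : Real.log (t / s) = -Real.log (s / t) := by
      rw [← Real.log_inv, inv_div]
    have h3 : t * (s / t) = s := by field_simp
    rw [h2]
    nlinarith [mul_le_mul_of_nonneg_left h1 ht]

lemma kl_nonneg (a q : ℝ) (ha : a ∈ Set.Icc (0:ℝ) 1) (hq : q ∈ Set.Ioo (0:ℝ) 1) :
    0 ≤ kl a q := by
  have h1 := key_ineq a q ha.1 hq.1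
  have h2 := key_ineq (1 - a) (1 - q) (by linarith [ha.2]) (by linarith [hq.2])
  unfold kl
  linarith

lemma mul_log_div (t s : ℝ) (ht : 0 ≤ t) (hs : 0 < s) :
    t * Real.log (t / s) = t * Real.log t - t * Real.log s := by
  rcases ht.eq_or_lt with h | h
  · simp [← h]
  · rw [Real.log_div h.ne' hs.ne', mul_sub]

lemma kl_expand (a q : ℝ) (ha : a ∈ Set.Icc (0:ℝ) 1) (hq : q ∈ Set.Ioo (0:ℝ) 1) :
    kl a q = a * Real.log a + (1 - a) * Real.log (1 - a)
      - a * Real.log q - (1 - a) * Real.log (1 - q) := by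
  unfold kl
  rw [mul_log_div a q ha.1 hq.1,
    mul_log_div (1 - a) (1 - q) (by linarith [ha.2]) (by linarith [hq.2])]
  ring

lemma kl_identity (a b q : ℝ) (ha : a ∈ Set.Icc (0:ℝ) 1) (hb : b ∈ Set.Icc (0:ℝ) 1)
    (hm : (a + b) / 2 ∈ Set.Ioo (0:ℝ) 1) (hq : q ∈ Set.Ioo (0:ℝ) 1) :
    kl a q + kl b q = kl a ((a + b) / 2) + kl b ((a + b) / 2) + 2 * kl ((a + b) / 2) q := by
  have hm' : (a + b) / 2 ∈ Set.Icc (0:ℝ) 1 := ⟨hm.1.le, hm.2.le⟩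
  rw [kl_expand a q ha hq, kl_expand b q hb hq, kl_expand a _ ha hm,
    kl_expand b _ hb hm, kl_expand _ q hm' hq]
  ring

theorem stmt3 (pa pb : ℝ) (hpa : pa ∈ Set.Icc (0:ℝ) 1) (hpb : pb ∈ Set.Icc (0:ℝ) 1)
    (hbar : (pa + pb) / 2 ∈ Set.Ioo (0:ℝ) 1) :
    sInf {x : ℝ | ∃ p ∈ Set.Ioo (0:ℝ) 1, x = max (kl pa p) (kl pb p)}
      ≤ kl pa ((pa + pb)/2) + kl pb ((pa + pb)/2)
    ∧ (1/2) * (kl pa ((pa + pb)/2) + kl pb ((pa + pb)/2))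
      ≤ sInf {x : ℝ | ∃ p ∈ Set.Ioo (0:ℝ) 1, x = max (kl pa p) (kl pb p)} := by
  set S := {x : ℝ | ∃ p ∈ Set.Ioo (0:ℝ) 1, x = max (kl pa p) (kl pb p)} with hS
  have hmem : max (kl pa ((pa + pb)/2)) (kl pb ((pa + pb)/2)) ∈ S :=
    ⟨(pa + pb)/2, hbar, rfl⟩
  have hbdd : BddBelow S := by
    refine ⟨0, fun x hx => ?_⟩
    obtain ⟨p, hp, rfl⟩ := hx
    exact le_max_of_le_left (kl_nonneg pa p hpa hp)
  have ha0 := kl_nonneg pa _ hpa hbar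
  have hb0 := kl_nonneg pb _ hpb hbar
  constructor
  · refine (csInf_le hbdd hmem).trans ?_
    exact max_le (by linarith) (by linarith)
  · refine le_csInf ⟨_, hmem⟩ (fun x hx => ?_)
    obtain ⟨p, hp, rfl⟩ := hx
    have hid := kl_identity pa pb p hpa hpb hbar hp
    have hmq := kl_nonneg ((pa + pb)/2) p ⟨hbar.1.le, hbar.2.le⟩ hp
    have h1 : kl pa p ≤ max (kl pa p) (kl pb p) := le_max_left _ _
    have h2 : kl pb p ≤ max (kl pa p) (kl pb p) := le_max_right _ _
    linarith
end

section
/- With the setup of the alternative matrix M' above, every item i ∉ S has score τ'_i = τ_i + (1/(n−1−2h))·Σ_{m∈S}(τ_m − τ_{k+1+2h}) under M'. In particular all scores of items outside S are increased by a common constant. -/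
noncomputable def score (n : ℕ) (M : Fin n → Fin n → ℝ) (i : Fin n) : ℝ :=
  (1 / ((n : ℝ) - 1)) * ∑ j ∈ Finset.univ.erase i, M i j

open Finset

theorem score_eq_add_of_row_eq_add {n : ℕ} {M M' : Fin n → Fin n → ℝ} {i : Fin n}
    (c : Fin n → ℝ) (hrow : ∀ j, j ≠ i → M' i j = M i j + c j) :
    score n M' i = score n M i + 1 / ((n : ℝ) - 1) * ∑ j ∈ univ.erase i, c j := by
  have hsum : ∑ j ∈ univ.erase i, M' i j = ∑ j ∈ univ.erase i, (M i j + c j) :=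
    sum_congr rfl fun j hj => hrow j (ne_of_mem_erase hj)
  rw [score, score, hsum, sum_add_distrib, mul_add]

theorem sum_erase_ite_mem_of_notMem {ι M : Type*} [Fintype ι] [DecidableEq ι]
    [AddCommMonoid M] {S : Finset ι} {i : ι} (hi : i ∉ S) (f : ι → M) :
    ∑ j ∈ univ.erase i, (if j ∈ S then f j else 0) = ∑ j ∈ S, f j := by
  rw [sum_ite_mem, erase_inter, univ_inter, erase_eq_of_notMem hi]

theorem stmt10_general (n k h : ℕ) (hn : 2 ≤ n) (hkn : k + 2 * h < n)
    (M M' : Fin n → Fin n → ℝ)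
    (S : Finset (Fin n))
    (hM' : ∀ i j : Fin n, M' i j =
      if i ∈ S ∧ j ∉ S then
        M i j - ((n : ℝ) - 1) / ((n : ℝ) - 1 - 2 * h) *
          (score n M i - score n M ⟨k + 2 * h, hkn⟩)
      else if j ∈ S ∧ i ∉ S then
        M i j + ((n : ℝ) - 1) / ((n : ℝ) - 1 - 2 * h) *
          (score n M j - score n M ⟨k + 2 * h, hkn⟩)
      else M i j) :
    ∀ i : Fin n, i ∉ S →
      score n M' i = score n M i + (1 / ((n : ℝ) - 1 - 2 * h)) *
        ∑ m ∈ S, (score n M m - score n M ⟨k + 2 * h, hkn⟩) := by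
  intro i hi
  set t : Fin n := ⟨k + 2 * h, hkn⟩
  have hrow : ∀ j, j ≠ i → M' i j = M i j + if j ∈ S then
      ((n : ℝ) - 1) / ((n : ℝ) - 1 - 2 * h) * (score n M j - score n M t) else 0 := by
    intro j _
    by_cases hj : j ∈ S <;> simp [hM', hi, hj, t]
  have hn1 : (n : ℝ) - 1 ≠ 0 := by
    have : (2 : ℝ) ≤ n := by exact_mod_cast hn
    linarith
  rw [score_eq_add_of_row_eq_add _ hrow, sum_erase_ite_mem_of_notMem hi, ← mul_sum]
  field_simp

theorem stmt10 (n k h : ℕ) (hn : 2 ≤ n) (hkh : 2 * h + 1 ≤ k) (hkn : k + 2 * h < n)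
    (M M' : Fin n → Fin n → ℝ)
    (hrange : ∀ i j : Fin n, i ≠ j → M i j ∈ Set.Ioo (0:ℝ) 1)
    (hskew : ∀ i j : Fin n, i ≠ j → M i j = 1 - M j i)
    (hdec : ∀ i j : Fin n, i < j → score n M j < score n M i)
    (S : Finset (Fin n)) (hS : S.card = 2 * h + 1) (hStop : ∀ m ∈ S, (m : ℕ) < k)
    (hM' : ∀ i j : Fin n, M' i j =
      if i ∈ S ∧ j ∉ S then
        M i j - ((n : ℝ) - 1) / ((n : ℝ) - 1 - 2 * h) *
          (score n M i - score n M ⟨k + 2 * h, hkn⟩)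
      else if j ∈ S ∧ i ∉ S then
        M i j + ((n : ℝ) - 1) / ((n : ℝ) - 1 - 2 * h) *
          (score n M j - score n M ⟨k + 2 * h, hkn⟩)
      else M i j) :
    ∀ i : Fin n, i ∉ S →
      score n M' i = score n M i + (1 / ((n : ℝ) - 1 - 2 * h)) *
        ∑ m ∈ S, (score n M m - score n M ⟨k + 2 * h, hkn⟩) :=
  stmt10_general n k h hn hkn M M' S hM'
end

section
/- Let Φ: ℝ → (0,1) be strictly increasing with Φ(t) = 1 − Φ(−t) for all t, and let w ∈ ℝ^n with pairwise comparison matrix M_{ij} = Φ(w_i − w_j) for i ≠ j. Define scores τ_i = (1/(n−1))Σ_{j≠i} Φ(w_i − w_j). Then for any items i, k: w_i > w_k if and only if τ_i > τ_k. In particular, the ordering of items by score coincides with the ordering by parameter. -/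
open Finset

section

variable {ι α β : Type*} [AddCommGroup α] [PartialOrder α] [IsOrderedAddMonoid α]
  [AddCommMonoid β] [PartialOrder β] [IsOrderedCancelAddMonoid β]

theorem StrictMono.sum_comp_sub_right {Φ : α → β} (hΦ : StrictMono Φ) {s : Finset ι}
    (hs : s.Nonempty) (w : ι → α) : StrictMono fun x => ∑ l ∈ s, Φ (x - w l) :=
  fun _ _ hxy => sum_lt_sum_of_nonempty hs fun _ _ => hΦ (sub_lt_sub_right hxy _)

end

theorem sum_erase_comp_sub_self {ι α β : Type*} [Fintype ι] [DecidableEq ι] [AddGroup α]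
    [AddCommGroup β] (Φ : α → β) (w : ι → α) (k : ι) :
    ∑ l ∈ univ.erase k, Φ (w k - w l) = ∑ l, Φ (w k - w l) - Φ 0 := by
  rw [sum_erase_eq_sub (mem_univ k), sub_self]

theorem stmt14_general (n : ℕ) (hn : 2 ≤ n) (Φ : ℝ → ℝ)
    (hmono : StrictMono Φ)
    (w : Fin n → ℝ) :
    ∀ i j : Fin n,
      w j < w i ↔
        (1 / ((n : ℝ) - 1)) * ∑ l ∈ Finset.univ.erase j, Φ (w j - w l)
          < (1 / ((n : ℝ) - 1)) * ∑ l ∈ Finset.univ.erase i, Φ (w i - w l) := by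
  intro i j
  have hscale : (0 : ℝ) < 1 / ((n : ℝ) - 1) := by
    have : (2 : ℝ) ≤ n := by exact_mod_cast hn
    exact one_div_pos.mpr (by linarith)
  have hscore : StrictMono fun x => ∑ l, Φ (x - w l) :=
    hmono.sum_comp_sub_right (univ_nonempty_iff.mpr ⟨i⟩) w
  rw [sum_erase_comp_sub_self, sum_erase_comp_sub_self, mul_lt_mul_iff_right₀ hscale,
    sub_lt_sub_iff_right]
  exact hscore.lt_iff_lt.symm

theorem stmt14 (n : ℕ) (hn : 2 ≤ n) (Φ : ℝ → ℝ)
    (hrange : ∀ t : ℝ, Φ t ∈ Set.Ioo (0:ℝ) 1)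
    (hmono : StrictMono Φ)
    (hsym : ∀ t : ℝ, Φ t = 1 - Φ (-t))
    (w : Fin n → ℝ) :
    ∀ i j : Fin n,
      w j < w i ↔
        (1 / ((n : ℝ) - 1)) * ∑ l ∈ Finset.univ.erase j, Φ (w j - w l)
          < (1 / ((n : ℝ) - 1)) * ∑ l ∈ Finset.univ.erase i, Φ (w i - w l) :=
  stmt14_general n hn Φ hmono w
end
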